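/- arXiv:math/0503054 — 5 statements merged into one kernel-verified Lean document; each statement's English description precedes it below -/
import Mathlib

section
/- Let X and Y be types, let V be a linearly ordered type, let glue : X → X → Y be any function, and let C : Y → V be a 'complexity function' such that for all M, N : X with M ≠ N one has C (glue M N) < max (C (glue M M)) (C (glue N N)). Define the sesquilinear pairing of finitely supported functions f, g : X →₀ ℂ to be the element ⟨f,g⟩ = ∑_{M,N} f(M) · conj(g(N)) · δ_{glue M N} of the free ℂ-module Y →₀ ℂ (where δ_y denotes the basis element supported at y with value 1, and conj denotes complex conjugation). Then the pairing is positive: for every f : X →₀ ℂ, ⟨f,f⟩ = 0 implies f = 0. -/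
/-!
Pick `M₀` in the support of `f` maximising `C (glue M M)`. No off-diagonal gluing of two
points of the support can equal `glue M₀ M₀`, as its complexity is strictly smaller. So the
coefficient of `⟨f, f⟩` at `glue M₀ M₀` is a sum of squared norms `‖f M‖ ^ 2`, one of
which is `‖f M₀‖ ^ 2 ≠ 0`.
-/

open Finset

namespace Finsupp

variable {X Y 𝕜 : Type*} [RCLike 𝕜]

noncomputable def gluePairing (glue : X → X → Y) (f g : X →₀ 𝕜) : Y →₀ 𝕜 :=
  f.sum fun M a => g.sum fun N b => single (glue M N) (a * starRingEnd 𝕜 b)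

variable [DecidableEq Y] (glue : X → X → Y) (f : X →₀ 𝕜) {y : Y}

theorem gluePairing_apply (g : X →₀ 𝕜) (y : Y) :
    gluePairing glue f g y =
      ∑ M ∈ f.support, ∑ N ∈ g.support,
        if glue M N = y then f M * starRingEnd 𝕜 (g N) else 0 := by
  simp only [gluePairing, Finsupp.sum, finsetSum_apply, single_apply]

theorem gluePairing_self_apply_of_offDiag_ne
    (hy : ∀ M ∈ f.support, ∀ N ∈ f.support, M ≠ N → glue M N ≠ y) :
    gluePairing glue f f y =
      ((∑ M ∈ f.support with glue M M = y, ‖f M‖ ^ 2 : ℝ) : 𝕜) := by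
  rw [gluePairing_apply, RCLike.ofReal_sum, Finset.sum_filter]
  refine Finset.sum_congr rfl fun M hM => ?_
  rw [Finset.sum_eq_single_of_mem M hM fun N hN hNM => if_neg (hy M hM N hN (Ne.symm hNM)),
    RCLike.mul_conj]
  split_ifs <;> simp

theorem apply_eq_zero_of_gluePairing_self_apply_eq_zero
    (hy : ∀ M ∈ f.support, ∀ N ∈ f.support, M ≠ N → glue M N ≠ y)
    (h : gluePairing glue f f y = 0) {M : X} (hM : glue M M = y) : f M = 0 := by
  by_contra hfM
  rw [gluePairing_self_apply_of_offDiag_ne glue f hy, RCLike.ofReal_eq_zero,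
    sum_eq_zero_iff_of_nonneg fun _ _ => by positivity] at h
  have hnorm := h M (mem_filter.mpr ⟨mem_support_iff.mpr hfM, hM⟩)
  exact hfM (norm_eq_zero.mp (pow_eq_zero_iff two_ne_zero |>.mp hnorm))

end Finsupp

open Finsupp

/-- The abstract complexity-function lemma: a sesquilinear pairing on the free
`ℂ`-vector space on a set `X`, with values in the free `ℂ`-vector space on `Y`,
defined by a gluing map `glue : X → X → Y`, is positive whenever there is a
complexity function `C : Y → V` into a linearly ordered set which is strictly
smaller on off-diagonal gluings than the max of the corresponding diagonal ones. -/
theorem complexity_function_positivity {X Y V : Type*} [LinearOrder V]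
    (glue : X → X → Y) (C : Y → V)
    (hC : ∀ M N : X, M ≠ N → C (glue M N) < max (C (glue M M)) (C (glue N N)))
    (f : X →₀ ℂ)
    (h : (f.sum fun M a => f.sum fun N b =>
        Finsupp.single (glue M N) (a * (starRingEnd ℂ) b)) = (0 : Y →₀ ℂ)) :
    f = 0 := by
  classical
  by_contra hf
  obtain ⟨M₀, hM₀, hmax⟩ :=
    f.support.exists_max_image (fun M => C (glue M M)) (support_nonempty_iff.mpr hf)
  have hoff : ∀ M ∈ f.support, ∀ N ∈ f.support, M ≠ N → glue M N ≠ glue M₀ M₀ :=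
    fun M hM N hN hMN heq => (hC M N hMN).not_ge (heq ▸ max_le (hmax M hM) (hmax N hN))
  have hpair : gluePairing glue f f = 0 := h
  exact mem_support_iff.mp hM₀ <|
    apply_eq_zero_of_gluePairing_self_apply_eq_zero glue f hoff (by rw [hpair]; rfl) rfl
end

section
/- Fix j : ℕ. For a finitely supported function a : (Equiv.Perm (Fin j) × ℕ) →₀ ℂ, suppose that in the polynomial ring Polynomial ℂ one has ∑_{(σ,k)} ∑_{(τ,l)} a(σ,k) · conj(a(τ,l)) · X^(c(σ∘τ⁻¹) + k + l) = 0, where the sums range over all pairs in the support of a and c(ρ) denotes the number of orbits of the permutation ρ acting on Fin j (fixed points counting as orbits). Then a = 0. -/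
/-- The number of orbits of a permutation `ρ` of `Fin j` acting on `Fin j`
(fixed points counting as orbits): the number of orbits of the cyclic
subgroup generated by `ρ`. -/
noncomputable def numOrbits {j : ℕ} (ρ : Equiv.Perm (Fin j)) : ℕ :=
  Nat.card (MulAction.orbitRel.Quotient (Subgroup.zpowers ρ) (Fin j))

open Equiv Polynomial

lemma gInvZpow {j n : ℕ} (ρ : Perm (Fin j)) (g : Fin j → Fin n)
    (hg : ∀ x, g (ρ x) = g x) : ∀ m : ℤ, ∀ x, g ((ρ ^ m) x) = g x := by
  have hn : ∀ m : ℕ, ∀ x, g ((ρ ^ m) x) = g x := by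
    intro m
    induction m with
    | zero => simp
    | succ m ih =>
      intro x
      rw [pow_succ, Perm.mul_apply, ih, hg]
  intro m x
  cases m with
  | ofNat k => simpa using hn k x
  | negSucc k =>
    have h1 : (ρ ^ Int.negSucc k) = (ρ ^ (k+1))⁻¹ := by
      rw [zpow_negSucc]
    rw [h1]
    have := hn (k+1) ((ρ ^ (k+1))⁻¹ x)
    rw [show (ρ ^ (k+1)) ((ρ ^ (k+1))⁻¹ x) = x from (ρ ^ (k+1)).apply_symm_apply x] at this
    exact this.symm
  
lemma card_fixed {j n : ℕ} (ρ : Perm (Fin j)) :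
    Nat.card {g : Fin j → Fin n // ∀ x, g (ρ x) = g x} = n ^ numOrbits ρ := by
  classical
  have e : {g : Fin j → Fin n // ∀ x, g (ρ x) = g x} ≃
      (MulAction.orbitRel.Quotient (Subgroup.zpowers ρ) (Fin j) → Fin n) := by
    refine
      { toFun := fun gh => Quotient.lift gh.1 ?_
        invFun := fun f => ⟨fun x => f (Quotient.mk'' x), ?_⟩
        left_inv := ?_
        right_inv := ?_ }
    · rintro x y hxy
      have hxy' : x ∈ MulAction.orbit (Subgroup.zpowers ρ) y := hxy
      obtain ⟨π, rfl⟩ := hxy'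
      obtain ⟨m, hm⟩ := π.2
      have : (π : Perm (Fin j)) • y = (ρ ^ m) y := by rw [← hm]; rfl
      show gh.1 ((π : Perm (Fin j)) • y) = gh.1 y
      rw [this]
      exact gInvZpow ρ gh.1 gh.2 m y
    · intro x
      refine congrArg f (Quotient.sound ?_)
      show MulAction.orbitRel _ _ (ρ x) x
      rw [MulAction.orbitRel_apply]
      exact ⟨⟨ρ, Subgroup.mem_zpowers ρ⟩, rfl⟩
    · intro gh; ext x; rfl
    · intro f; ext q; induction q using Quotient.inductionOn; rfl
  rw [Nat.card_congr e, Nat.card_fun, Nat.card_eq_fintype_card (α := Fin n), Fintype.card_fin]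
  rfl

lemma card_glue {j n : ℕ} (σ τ : Perm (Fin j)) :
    Nat.card {g : Fin j → Fin n // g ∘ σ = g ∘ τ} = n ^ numOrbits (σ * τ⁻¹) := by
  rw [← card_fixed (n := n) (σ * τ⁻¹)]
  refine Nat.card_congr (Equiv.subtypeEquivRight ?_)
  intro g
  constructor
  · intro hc x
    have := congrFun hc (τ⁻¹ x)
    simpa [Perm.mul_apply] using this
  · intro hc
    funext y
    have := hc (τ y)
    simpa [Perm.mul_apply] using this

noncomputable def V {j n : ℕ} (σ : Perm (Fin j)) (g h : Fin j → Fin n) : ℂ :=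
  if h = g ∘ σ then 1 else 0

lemma VV {j n : ℕ} (σ τ : Perm (Fin j)) :
    ∑ g : Fin j → Fin n, ∑ h : Fin j → Fin n, V σ g h * V τ g h
      = (n : ℂ) ^ numOrbits (σ * τ⁻¹) := by
  classical
  have h1 : ∀ g : Fin j → Fin n, ∑ h : Fin j → Fin n, V σ g h * V τ g h
      = if g ∘ σ = g ∘ τ then (1 : ℂ) else 0 := by
    intro g
    have key : ∀ h : Fin j → Fin n, V σ g h * V τ g h
        = if h = g ∘ σ then (if g ∘ σ = g ∘ τ then (1:ℂ) else 0) else 0 := by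
      intro h
      simp only [V]
      by_cases h1 : h = g ∘ σ
      · subst h1
        by_cases h2 : g ∘ σ = g ∘ τ <;> simp [h2]
      · simp [h1]
    rw [Finset.sum_congr rfl (fun h _ => key h)]
    simp
  rw [Finset.sum_congr rfl (fun g _ => h1 g), Finset.sum_boole]
  rw [← Fintype.card_subtype, ← Nat.card_eq_fintype_card, card_glue]
  push_cast
  ring

/-- Positivity of the universal pairing on oriented 1-manifolds with boundary
`j` positive and `j` negative points: a 1-manifold is a permutation `σ`
(pattern of arcs) together with `k` closed circles; gluing `(σ,k)` to the
orientation reversal of `(τ,l)` yields `numOrbits (σ * τ⁻¹) + k + l` circles,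
recorded as a power of `X` in `ℂ[X]`. -/
theorem one_manifold_pairing_positive (j : ℕ)
    (a : (Equiv.Perm (Fin j) × ℕ) →₀ ℂ)
    (h : (a.sum fun p x => a.sum fun q y =>
        Polynomial.C (x * (starRingEnd ℂ) y) *
          Polynomial.X ^ (numOrbits (p.1 * q.1⁻¹) + p.2 + q.2)) = (0 : Polynomial ℂ)) :
    a = 0 := by
  classical
  -- the "per-permutation" polynomial
  set F : Perm (Fin j) → Polynomial ℂ := fun σ =>
    a.sum fun p x => if p.1 = σ then C x * X ^ p.2 else 0 with hF
  -- Step 1:  for every n ≥ j, F σ vanishes at n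
  have step1 : ∀ (σ : Perm (Fin j)) (n : ℕ), j ≤ n → (F σ).eval ((n : ℂ)) = 0 := by
    intro σ n hjn
    set Φ : (Fin j → Fin n) → (Fin j → Fin n) → ℂ := fun g h' =>
      a.sum fun p x => x * (n : ℂ) ^ p.2 * V p.1 g h' with hΦ
    -- conjugate of Φ
    have conjΦ : ∀ g h', (starRingEnd ℂ) (Φ g h')
        = a.sum fun q y => (starRingEnd ℂ) y * (n : ℂ) ^ q.2 * V q.1 g h' := by
      intro g h'
      rw [hΦ, map_finsuppSum]
      refine Finsupp.sum_congr fun p _ => ?_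
      simp [V, apply_ite (starRingEnd ℂ)]
    -- the combined term
    set T : (Perm (Fin j) × ℕ) → (Perm (Fin j) × ℕ) → (Fin j → Fin n) → (Fin j → Fin n) → ℂ :=
      fun p q g h' => (a p * (starRingEnd ℂ) (a q)) *
        ((n : ℂ) ^ (p.2 + q.2) * (V p.1 g h' * V q.1 g h')) with hT
    have L : ∑ g : Fin j → Fin n, ∑ h' : Fin j → Fin n, Φ g h' * (starRingEnd ℂ) (Φ g h')
        = ∑ gh ∈ Finset.univ ×ˢ (Finset.univ : Finset (Fin j → Fin n)),
            ∑ pq ∈ a.support ×ˢ a.support, T pq.1 pq.2 gh.1 gh.2 := by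
      rw [Finset.sum_product]
      refine Finset.sum_congr rfl fun g _ => Finset.sum_congr rfl fun h' _ => ?_
      rw [conjΦ, hΦ]
      simp only [Finsupp.sum]
      rw [Finset.sum_mul_sum, Finset.sum_product]
      refine Finset.sum_congr rfl fun p _ => Finset.sum_congr rfl fun q _ => ?_
      simp only [hT, pow_add]
      ring
    have R : (a.sum fun p x => a.sum fun q y => (x * (starRingEnd ℂ) y) *
          (n : ℂ) ^ (numOrbits (p.1 * q.1⁻¹) + p.2 + q.2))
        = ∑ pq ∈ a.support ×ˢ a.support,
            ∑ gh ∈ Finset.univ ×ˢ (Finset.univ : Finset (Fin j → Fin n)),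
              T pq.1 pq.2 gh.1 gh.2 := by
      simp only [Finsupp.sum]
      rw [Finset.sum_product]
      refine Finset.sum_congr rfl fun p _ => Finset.sum_congr rfl fun q _ => ?_
      rw [Finset.sum_product]
      simp only [hT, ← Finset.mul_sum]
      rw [VV]
      ring
    -- evaluate the hypothesis at n
    have heval : (a.sum fun p x => a.sum fun q y => (x * (starRingEnd ℂ) y) *
        (n : ℂ) ^ (numOrbits (p.1 * q.1⁻¹) + p.2 + q.2)) = 0 := by
      have := congrArg (Polynomial.eval ((n : ℕ) : ℂ)) h
      simpa only [Finsupp.sum, Polynomial.eval_finset_sum, eval_mul, eval_C, eval_pow,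
        eval_X, eval_zero] using this
    have hS : ∑ g : Fin j → Fin n, ∑ h' : Fin j → Fin n,
        Φ g h' * (starRingEnd ℂ) (Φ g h') = 0 := by
      rw [L, Finset.sum_comm, ← R, heval]
    -- deduce Φ = 0
    have hΦ0 : ∀ g h', Φ g h' = 0 := by
      have hr : ((∑ g : Fin j → Fin n, ∑ h' : Fin j → Fin n,
          Complex.normSq (Φ g h') : ℝ) : ℂ) = 0 := by
        push_cast
        simpa only [Complex.mul_conj] using hS
      have hr' : ∑ g : Fin j → Fin n, ∑ h' : Fin j → Fin n,
          Complex.normSq (Φ g h') = 0 := by exact_mod_cast hr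
      intro g h'
      have h1 := (Finset.sum_eq_zero_iff_of_nonneg (fun g _ =>
        Finset.sum_nonneg fun h' _ => Complex.normSq_nonneg _)).1 hr' g (Finset.mem_univ g)
      have h2 := (Finset.sum_eq_zero_iff_of_nonneg (fun h' _ =>
        Complex.normSq_nonneg _)).1 h1 h' (Finset.mem_univ h')
      exact Complex.normSq_eq_zero.1 h2
    -- specialize at an injective g₀
    set g₀ : Fin j → Fin n := fun i => Fin.castLE hjn i with hg₀
    have hg₀inj : Function.Injective g₀ := Fin.castLE_injective hjn
    have key : Φ g₀ (g₀ ∘ σ) = (F σ).eval ((n : ℂ)) := by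
      rw [hΦ, hF]
      simp only [Finsupp.sum, Polynomial.eval_finset_sum]
      refine Finset.sum_congr rfl fun p _ => ?_
      have hiff : (g₀ ∘ σ = g₀ ∘ p.1) ↔ p.1 = σ := by
        constructor
        · intro hc
          refine Equiv.ext fun i => ?_
          exact (hg₀inj (congrFun hc i)).symm
        · rintro rfl; rfl
      by_cases hps : p.1 = σ
      · simp [V, hiff, hps]
      · simp [V, hiff, hps]
    rw [← key]
    exact hΦ0 g₀ (g₀ ∘ σ)
  -- Step 2: F σ = 0
  have step2 : ∀ σ : Perm (Fin j), F σ = 0 := by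
    intro σ
    apply Polynomial.eq_zero_of_infinite_isRoot
    apply Set.infinite_of_injective_forall_mem (f := fun m : ℕ => ((m + j : ℕ) : ℂ))
    · intro x y hxy
      have : (x + j : ℕ) = (y + j : ℕ) := Nat.cast_injective hxy
      omega
    · intro m
      exact step1 σ (m + j) (by omega)
  -- Step 3: extract coefficients
  ext p
  obtain ⟨σ, k⟩ := p
  have hc : (F σ).coeff k = if (σ, k) ∈ a.support then a (σ, k) else 0 := by
    rw [hF]
    simp only [Finsupp.sum, Polynomial.finset_sum_coeff]
    rw [← Finsupp.sum_ite_eq' a (σ, k) (fun _ x => x)]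
    simp only [Finsupp.sum]
    refine Finset.sum_congr rfl fun p _ => ?_
    by_cases h1 : p.1 = σ
    · by_cases h2 : p.2 = k
      · have : p = (σ, k) := Prod.ext h1 h2
        simp [h1, h2, this, coeff_C_mul, coeff_X_pow]
      · have : p ≠ (σ, k) := fun hp => h2 (by rw [hp])
        simp [h1, h2, this, coeff_C_mul, coeff_X_pow, Ne.symm h2]
    · have : p ≠ (σ, k) := fun hp => h1 (by rw [hp])
      simp [h1, this, coeff_C_mul, coeff_X_pow]
  rw [step2 σ, coeff_zero] at hc
  by_cases hmem : (σ, k) ∈ a.support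
  · rw [if_pos hmem] at hc; exact hc.symm ▸ rfl
  · simpa using Finsupp.notMem_support_iff.mp hmem
end

section
/- Fix j : ℕ. For a function a : Equiv.Perm (Fin j) → ℂ, suppose that in the polynomial ring Polynomial ℂ one has ∑_{σ} ∑_{τ} a(σ) · conj(a(τ)) · X^(c(σ∘τ⁻¹)) = 0, where the sums range over all permutations of Fin j and c(ρ) denotes the number of orbits of ρ acting on Fin j (fixed points counting as orbits). Then a = 0. -/
open MulAction

section aux
variable {j n : ℕ} (ρ : Equiv.Perm (Fin j))

private lemma comp_inv' {f : Fin j → Fin n} (hf : f ∘ ρ = f) : f ∘ ⇑ρ⁻¹ = f := by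
  funext x
  have := congrFun hf (ρ⁻¹ x)
  simpa using this.symm

private lemma comp_zpow' {f : Fin j → Fin n} (hf : f ∘ ρ = f) (k : ℤ) : f ∘ ⇑(ρ ^ k) = f := by
  induction k using Int.induction_on with
  | zero => simp
  | succ k ih =>
      rw [zpow_add_one]
      funext x
      have h1 := congrFun ih (ρ x)
      have h2 := congrFun hf x
      simpa using h1.trans h2
  | pred k ih =>
      rw [zpow_sub_one]
      funext x
      have h1 := congrFun ih (ρ⁻¹ x)
      have h2 := congrFun (comp_inv' ρ hf) x
      simpa using h1.trans h2

private noncomputable def invEquiv : {f : Fin j → Fin n // f ∘ ρ = f} ≃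
    (orbitRel.Quotient (Subgroup.zpowers ρ) (Fin j) → Fin n) where
  toFun f := Quotient.lift f.1 (by
    rintro x y hxy
    obtain ⟨⟨g, hg⟩, rfl⟩ := hxy
    obtain ⟨k, rfl⟩ := Subgroup.mem_zpowers_iff.mp hg
    exact congrFun (comp_zpow' ρ f.2 k) y)
  invFun g := ⟨fun x => g ⟦x⟧, by
    funext x
    show g ⟦ρ x⟧ = g ⟦x⟧
    congr 1
    exact Quotient.sound ⟨⟨ρ, Subgroup.mem_zpowers ρ⟩, rfl⟩⟩
  left_inv f := by ext x; rfl
  right_inv g := by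
    funext q
    induction q using Quotient.inductionOn with
    | h x => rfl

end aux

private lemma card_inv {j n : ℕ} (ρ : Equiv.Perm (Fin j)) :
    Nat.card {f : Fin j → Fin n // f ∘ ρ = f} = n ^ numOrbits ρ := by
  rw [Nat.card_congr (invEquiv ρ), Nat.card_fun]
  simp [numOrbits]

private lemma pred_iff {j n : ℕ} (σ τ : Equiv.Perm (Fin j)) (f : Fin j → Fin n) :
    f ∘ ⇑(σ * τ⁻¹) = f ↔ f ∘ ⇑σ = f ∘ ⇑τ := by
  constructor <;> intro hh <;> funext x
  · have := congrFun hh (τ x); simpa using this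
  · have := congrFun hh (τ⁻¹ x); simpa using this

private lemma pow_orbits_eq_sum {j : ℕ} (σ τ : Equiv.Perm (Fin j)) :
    ((j : ℂ)) ^ numOrbits (σ * τ⁻¹) =
      ∑ f : Fin j → Fin j, (if f ∘ ⇑σ = f ∘ ⇑τ then (1 : ℂ) else 0) := by
  classical
  have h1 : (j : ℕ) ^ numOrbits (σ * τ⁻¹)
      = Nat.card {f : Fin j → Fin j // f ∘ ⇑σ = f ∘ ⇑τ} := by
    rw [← card_inv (σ * τ⁻¹)]
    exact Nat.card_congr (Equiv.subtypeEquivRight fun f => (pred_iff σ τ f))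
  have h2 : Nat.card {f : Fin j → Fin j // f ∘ ⇑σ = f ∘ ⇑τ}
      = ∑ f : Fin j → Fin j, (if f ∘ ⇑σ = f ∘ ⇑τ then (1 : ℕ) else 0) := by
    rw [Nat.card_eq_fintype_card, Fintype.card_subtype, Finset.card_filter]
  have h3 : ((j : ℂ)) ^ numOrbits (σ * τ⁻¹)
      = ((∑ f : Fin j → Fin j, (if f ∘ ⇑σ = f ∘ ⇑τ then (1 : ℕ) else 0) : ℕ) : ℂ) := by
    rw [← h2, ← h1]
    push_cast
    ring
  rw [h3]
  push_cast
  rfl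

/-- Nondegeneracy of the Gram matrix `(X^{c(σ τ⁻¹)})_{σ,τ}` indexed by
permutations of `Fin j`, with entries in `ℂ[X]`: gluing the 1-manifold of
arcs encoded by `σ` to the orientation reversal of the one encoded by `τ`
yields `c(σ τ⁻¹)` circles. -/
theorem one_manifold_arc_pairing_positive (j : ℕ) (a : Equiv.Perm (Fin j) → ℂ)
    (h : (∑ σ : Equiv.Perm (Fin j), ∑ τ : Equiv.Perm (Fin j),
        Polynomial.C (a σ * (starRingEnd ℂ) (a τ)) *
          Polynomial.X ^ (numOrbits (σ * τ⁻¹))) = (0 : Polynomial ℂ)) :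
    a = 0 := by
  classical
  have h0 := congrArg (Polynomial.eval ((j : ℂ))) h
  simp only [Polynomial.eval_finset_sum, Polynomial.eval_mul, Polynomial.eval_C,
    Polynomial.eval_pow, Polynomial.eval_X, Polynomial.eval_zero] at h0
  set conj := starRingEnd ℂ with hconjdef
  let T : (Fin j → Fin j) → (Fin j → Fin j) → ℂ :=
    fun f g => ∑ σ : Equiv.Perm (Fin j), if f ∘ ⇑σ = g then a σ else 0
  have hT : ∀ f g, T f g = ∑ σ : Equiv.Perm (Fin j), if f ∘ ⇑σ = g then a σ else 0 :=
    fun f g => rfl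
  have key : ∀ f : Fin j → Fin j,
      (∑ g : Fin j → Fin j, T f g * conj (T f g)) =
      ∑ σ : Equiv.Perm (Fin j), ∑ τ : Equiv.Perm (Fin j),
        a σ * conj (a τ) * (if f ∘ ⇑σ = f ∘ ⇑τ then (1:ℂ) else 0) := by
    intro f
    have hconj : ∀ g, conj (T f g)
        = ∑ τ : Equiv.Perm (Fin j), if f ∘ ⇑τ = g then conj (a τ) else 0 := by
      intro g
      rw [hT, map_sum]
      refine Finset.sum_congr rfl fun τ _ => ?_
      split_ifs <;> simp
    calc (∑ g : Fin j → Fin j, T f g * conj (T f g))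
        = ∑ g : Fin j → Fin j, ∑ σ : Equiv.Perm (Fin j), ∑ τ : Equiv.Perm (Fin j),
            (if f ∘ ⇑σ = g then a σ else 0) * (if f ∘ ⇑τ = g then conj (a τ) else 0) := by
          refine Finset.sum_congr rfl fun g _ => ?_
          rw [hconj g, hT, Finset.sum_mul_sum]
      _ = ∑ σ : Equiv.Perm (Fin j), ∑ g : Fin j → Fin j, ∑ τ : Equiv.Perm (Fin j),
            (if f ∘ ⇑σ = g then a σ else 0) * (if f ∘ ⇑τ = g then conj (a τ) else 0) :=
          Finset.sum_comm
      _ = ∑ σ : Equiv.Perm (Fin j), ∑ τ : Equiv.Perm (Fin j), ∑ g : Fin j → Fin j,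
            (if f ∘ ⇑σ = g then a σ else 0) * (if f ∘ ⇑τ = g then conj (a τ) else 0) :=
          Finset.sum_congr rfl fun σ _ => Finset.sum_comm
      _ = ∑ σ : Equiv.Perm (Fin j), ∑ τ : Equiv.Perm (Fin j),
            a σ * conj (a τ) * (if f ∘ ⇑σ = f ∘ ⇑τ then (1:ℂ) else 0) := by
          refine Finset.sum_congr rfl fun σ _ => Finset.sum_congr rfl fun τ _ => ?_
          simp only [ite_mul, zero_mul]
          rw [Finset.sum_ite_eq Finset.univ (f ∘ ⇑σ)
            (fun g => (a σ) * (if f ∘ ⇑τ = g then conj (a τ) else 0))]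
          simp only [Finset.mem_univ, if_true]
          by_cases hc : f ∘ ⇑σ = f ∘ ⇑τ
          · simp [hc, eq_comm, mul_assoc]
          · have hc' : ¬ (f ∘ ⇑τ = f ∘ ⇑σ) := fun hh => hc hh.symm
            simp [hc, hc']
  have h1 : (0 : ℂ) = ∑ f : Fin j → Fin j, ∑ g : Fin j → Fin j, T f g * conj (T f g) := by
    rw [← h0]
    calc ∑ σ : Equiv.Perm (Fin j), ∑ τ : Equiv.Perm (Fin j),
          a σ * conj (a τ) * (j : ℂ) ^ numOrbits (σ * τ⁻¹)
        = ∑ σ : Equiv.Perm (Fin j), ∑ τ : Equiv.Perm (Fin j), ∑ f : Fin j → Fin j,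
            a σ * conj (a τ) * (if f ∘ ⇑σ = f ∘ ⇑τ then (1:ℂ) else 0) := by
          refine Finset.sum_congr rfl fun σ _ => Finset.sum_congr rfl fun τ _ => ?_
          rw [pow_orbits_eq_sum σ τ, Finset.mul_sum]
      _ = ∑ σ : Equiv.Perm (Fin j), ∑ f : Fin j → Fin j, ∑ τ : Equiv.Perm (Fin j),
            a σ * conj (a τ) * (if f ∘ ⇑σ = f ∘ ⇑τ then (1:ℂ) else 0) :=
          Finset.sum_congr rfl fun σ _ => Finset.sum_comm
      _ = ∑ f : Fin j → Fin j, ∑ σ : Equiv.Perm (Fin j), ∑ τ : Equiv.Perm (Fin j),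
            a σ * conj (a τ) * (if f ∘ ⇑σ = f ∘ ⇑τ then (1:ℂ) else 0) :=
          Finset.sum_comm
      _ = ∑ f : Fin j → Fin j, ∑ g : Fin j → Fin j, T f g * conj (T f g) := by
          exact Finset.sum_congr rfl fun f _ => (key f).symm
  have h2 : (0 : ℝ) = ∑ f : Fin j → Fin j, ∑ g : Fin j → Fin j, Complex.normSq (T f g) := by
    have hh := h1
    rw [hconjdef] at hh
    simp only [Complex.mul_conj] at hh
    have hh2 : ((∑ f : Fin j → Fin j, ∑ g : Fin j → Fin j,
        Complex.normSq (T f g) : ℝ) : ℂ) = 0 := by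
      rw [Complex.ofReal_sum]
      simp only [Complex.ofReal_sum]
      exact hh.symm
    exact (Complex.ofReal_eq_zero.mp hh2).symm
  have hzero : ∀ f g : Fin j → Fin j, T f g = 0 := by
    intro f g
    have hnn : ∀ f ∈ (Finset.univ : Finset (Fin j → Fin j)),
        (0:ℝ) ≤ ∑ g : Fin j → Fin j, Complex.normSq (T f g) :=
      fun f _ => Finset.sum_nonneg fun g _ => Complex.normSq_nonneg _
    have := (Finset.sum_eq_zero_iff_of_nonneg hnn).mp h2.symm f (Finset.mem_univ f)
    have := (Finset.sum_eq_zero_iff_of_nonneg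
      (fun g _ => Complex.normSq_nonneg (T f g))).mp this g (Finset.mem_univ g)
    exact Complex.normSq_eq_zero.mp this
  funext σ₀
  have := hzero id ⇑σ₀
  rw [hT id ⇑σ₀] at this
  simp only [Function.id_comp] at this
  rw [show (fun σ : Equiv.Perm (Fin j) => if ⇑σ = ⇑σ₀ then a σ else 0)
      = (fun σ => if σ = σ₀ then a σ else 0) from funext fun σ => by
        simp [Equiv.coe_inj]] at this
  simpa using this
end

section
/- Fix j : ℕ and let M(2j) denote the set of perfect matchings of Fin (2j), i.e. permutations f of Fin (2j) with f ∘ f = id and f(x) ≠ x for all x. For f, g ∈ M(2j), let L(f,g) denote the number of orbits on Fin (2j) of the subgroup of permutations generated by f and g (equivalently, the number of loops formed by the two matchings). For a finitely supported function a : (M(2j) × ℕ) →₀ ℂ, suppose that in Polynomial ℂ one has ∑_{(f,k)} ∑_{(g,l)} a(f,k) · conj(a(g,l)) · X^(L(f,g) + k + l) = 0. Then a = 0. -/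
/-- A perfect matching of `Fin n`: a fixed-point-free involutive permutation. -/
def IsPerfectMatching {n : ℕ} (f : Equiv.Perm (Fin n)) : Prop :=
  f * f = 1 ∧ ∀ x, f x ≠ x

/-- The number of loops formed by two matchings `f` and `g` of `Fin n`:
the number of orbits on `Fin n` of the subgroup generated by `f` and `g`. -/
noncomputable def numLoops {n : ℕ} (f g : Equiv.Perm (Fin n)) : ℕ :=
  Nat.card (MulAction.orbitRel.Quotient (Subgroup.closure {f, g}) (Fin n))

/-!
Every loop formed by two perfect matchings `f, g` of `2j` points contains at least the two points
`x, f x`, so `L(f,g) ≤ j`; equality forces every loop to be `{x, f x} = {x, g x}`, i.e. `f = g`.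
So if `m` is the largest number of closed circles occurring in `a`, only the diagonal terms
`((f,m),(f,m))` reach the degree `j + 2m`, whose coefficient is therefore `∑_f |a(f,m)|²`.
-/

open MulAction Polynomial ComplexConjugate
open scoped Pointwise

section OrbitCounting

variable {G α : Type*} [Group G] [MulAction G α]

theorem card_eq_sum_card_orbit [Finite α] [Fintype (orbitRel.Quotient G α)] :
    Nat.card α = ∑ ω : orbitRel.Quotient G α, Nat.card ω.orbit := by
  have : ∀ ω : orbitRel.Quotient G α, Fintype ω.orbit := fun _ => Fintype.ofFinite _
  have : Fintype α := Fintype.ofFinite α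
  rw [Nat.card_congr (selfEquivSigmaOrbits' G α), Nat.card_eq_fintype_card, Fintype.card_sigma]
  simp only [Nat.card_eq_fintype_card]

theorem mul_card_orbitRel_quotient_eq_sum [Fintype (orbitRel.Quotient G α)] (k : ℕ) :
    k * Nat.card (orbitRel.Quotient G α) = ∑ _ω : orbitRel.Quotient G α, k := by
  rw [Finset.sum_const, Finset.card_univ, smul_eq_mul, mul_comm, Nat.card_eq_fintype_card]

theorem orbitRel.Quotient.le_card_orbit {k : ℕ} (hk : ∀ x : α, k ≤ (orbit G x).ncard)
    (ω : orbitRel.Quotient G α) : k ≤ Nat.card ω.orbit := by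
  induction ω using Quotient.inductionOn' with
  | h x => simpa using hk x

theorem mul_card_orbitRel_quotient_le [Finite α] {k : ℕ}
    (hk : ∀ x : α, k ≤ (orbit G x).ncard) :
    k * Nat.card (orbitRel.Quotient G α) ≤ Nat.card α := by
  have := Fintype.ofFinite (orbitRel.Quotient G α)
  rw [mul_card_orbitRel_quotient_eq_sum, card_eq_sum_card_orbit (G := G) (α := α)]
  exact Finset.sum_le_sum fun ω _ => orbitRel.Quotient.le_card_orbit hk ω

theorem mul_card_orbitRel_quotient_eq_iff [Finite α] {k : ℕ}
    (hk : ∀ x : α, k ≤ (orbit G x).ncard) :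
    k * Nat.card (orbitRel.Quotient G α) = Nat.card α ↔ ∀ x : α, (orbit G x).ncard = k := by
  have := Fintype.ofFinite (orbitRel.Quotient G α)
  rw [mul_card_orbitRel_quotient_eq_sum, card_eq_sum_card_orbit (G := G) (α := α),
    Finset.sum_eq_sum_iff_of_le fun ω _ => orbitRel.Quotient.le_card_orbit hk ω]
  simp only [Finset.mem_univ, forall_const, Quotient.forall, orbitRel.Quotient.orbit_mk,
    Nat.card_coe_set_eq, eq_comm]

theorem orbit_closure_subset {S : Set G} {s : Set α} (hS : ∀ g ∈ S, g • s = s) {x : α}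
    (hx : x ∈ s) : orbit (Subgroup.closure S) x ⊆ s := by
  rintro _ ⟨⟨g, hg⟩, rfl⟩
  have hg : g ∈ stabilizer G s :=
    (Subgroup.closure_le _).mpr (fun g hg => mem_stabilizer_iff.mpr (hS g hg)) hg
  rw [← mem_stabilizer_iff.mp hg]
  exact Set.smul_mem_smul_set hx

theorem smul_mem_orbit_closure {S : Set G} {g : G} (hg : g ∈ S) (x : α) :
    g • x ∈ orbit (Subgroup.closure S) x :=
  ⟨⟨g, Subgroup.subset_closure hg⟩, rfl⟩

end OrbitCounting

section Matchings

variable {n : ℕ} {f g : Equiv.Perm (Fin n)}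

theorem two_le_ncard_orbit_closure_pair (hf : ∀ x, f x ≠ x) (x : Fin n) :
    2 ≤ (orbit (Subgroup.closure {f, g}) x).ncard := by
  rw [← Set.ncard_pair (hf x).symm]
  exact Set.ncard_le_ncard
    (Set.pair_subset (mem_orbit_self x) (smul_mem_orbit_closure (by simp) x))

theorem two_mul_numLoops_le (hf : ∀ x, f x ≠ x) : 2 * numLoops f g ≤ n := by
  simpa [numLoops] using mul_card_orbitRel_quotient_le (two_le_ncard_orbit_closure_pair (g := g) hf)

theorem eq_of_two_mul_numLoops_eq (hf : ∀ x, f x ≠ x) (hg : ∀ x, g x ≠ x)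
    (h : 2 * numLoops f g = n) : f = g := by
  have horbit := (mul_card_orbitRel_quotient_eq_iff (two_le_ncard_orbit_closure_pair hf)).mp
    (by simpa [numLoops] using h)
  ext x
  have hpair : {x, f x} = orbit (Subgroup.closure {f, g}) x :=
    Set.eq_of_subset_of_ncard_le
      (Set.pair_subset (mem_orbit_self x) (smul_mem_orbit_closure (by simp) x))
      (by rw [horbit x, Set.ncard_pair (hf x).symm])
  have hgx : g x ∈ ({x, f x} : Set (Fin n)) := hpair ▸ smul_mem_orbit_closure (by simp) x
  rcases hgx with hgx | hgx
  · exact absurd hgx (hg x)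
  · exact congrArg Fin.val hgx.symm

theorem orbit_closure_pair_self (hf : f * f = 1) (x : Fin n) :
    orbit (Subgroup.closure {f, f}) x = {x, f x} := by
  refine (orbit_closure_subset ?_ (Set.mem_insert x _)).antisymm
    (Set.pair_subset (mem_orbit_self x) (smul_mem_orbit_closure (by simp) x))
  intro σ hσ
  rw [Set.pair_eq_singleton, Set.mem_singleton_iff] at hσ
  subst σ
  have hffx : f (f x) = x := by rw [← Equiv.Perm.mul_apply, hf, Equiv.Perm.one_apply]
  rw [← Set.image_smul, Set.image_pair, Equiv.Perm.smul_def, Equiv.Perm.smul_def, hffx,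
    Set.pair_comm]

theorem two_mul_numLoops_self (hf : IsPerfectMatching f) : 2 * numLoops f f = n := by
  have := (mul_card_orbitRel_quotient_eq_iff (two_le_ncard_orbit_closure_pair (g := f) hf.2)).mpr
    fun x => by rw [orbit_closure_pair_self hf.1, Set.ncard_pair (hf.2 x).symm]
  simpa [numLoops] using this

end Matchings

section GluingPairing

variable {ι 𝕜 : Type*} [RCLike 𝕜]

noncomputable def gluingPairing (L : ι → ι → ℕ) (a : ι × ℕ →₀ 𝕜) : 𝕜[X] :=
  a.sum fun p x => a.sum fun q y => C (x * conj y) * X ^ (L p.1 q.1 + p.2 + q.2)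

theorem coeff_gluingPairing (L : ι → ι → ℕ) (a : ι × ℕ →₀ 𝕜) (d : ℕ) :
    (gluingPairing L a).coeff d = ∑ p ∈ a.support, ∑ q ∈ a.support,
      if d = L p.1 q.1 + p.2 + q.2 then a p * conj (a q) else 0 := by
  simp only [gluingPairing, Finsupp.sum, finsetSum_coeff, coeff_C_mul, coeff_X_pow, mul_ite,
    mul_one, mul_zero]

theorem coeff_gluingPairing_top {L : ι → ι → ℕ} {N : ℕ} (hle : ∀ p q, L p q ≤ N)
    (hdiag : ∀ p q, L p q = N ↔ p = q) {a : ι × ℕ →₀ 𝕜} {m : ℕ}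
    (hm : ∀ p ∈ a.support, p.2 ≤ m) :
    (gluingPairing L a).coeff (N + 2 * m) =
      ∑ p ∈ a.support with p.2 = m, ((‖a p‖ ^ 2 : ℝ) : 𝕜) := by
  classical
  rw [coeff_gluingPairing, Finset.sum_filter]
  refine Finset.sum_congr rfl fun p hp => ?_
  by_cases hpm : p.2 = m
  · have hcond : ∀ q ∈ a.support, N + 2 * m = L p.1 q.1 + p.2 + q.2 ↔ q = p := by
      intro q hq
      constructor
      · intro hd
        have := hle p.1 q.1
        have := hm q hq
        exact Prod.ext ((hdiag _ _).mp (by omega)).symm (by omega)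
      · rintro rfl
        rw [(hdiag _ _).mpr rfl]
        omega
    rw [Finset.sum_congr rfl fun q hq => if_congr (hcond q hq) rfl rfl, Finset.sum_ite_eq',
      if_pos hp, if_pos hpm, RCLike.mul_conj, RCLike.ofReal_pow]
  · rw [if_neg hpm]
    refine Finset.sum_eq_zero fun q hq => if_neg ?_
    have := hle p.1 q.1
    have := hm p hp
    have := hm q hq
    omega

theorem eq_zero_of_gluingPairing_eq_zero {L : ι → ι → ℕ} {N : ℕ} (hle : ∀ p q, L p q ≤ N)
    (hdiag : ∀ p q, L p q = N ↔ p = q) {a : ι × ℕ →₀ 𝕜} (h : gluingPairing L a = 0) :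
    a = 0 := by
  by_contra ha
  obtain ⟨p₀, hp₀, hmax⟩ :=
    a.support.exists_mem_eq_sup (Finsupp.support_nonempty_iff.mpr ha) Prod.snd
  have htop := coeff_gluingPairing_top hle hdiag fun p hp =>
    hmax ▸ Finset.le_sup (f := Prod.snd) hp
  rw [h, coeff_zero, ← RCLike.ofReal_sum, eq_comm, RCLike.ofReal_eq_zero,
    Finset.sum_eq_zero_iff_of_nonneg fun p _ => sq_nonneg ‖a p‖] at htop
  have hnorm := htop p₀ (Finset.mem_filter.mpr ⟨hp₀, rfl⟩)
  exact Finsupp.mem_support_iff.mp hp₀ (by simpa using hnorm)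

end GluingPairing

/-- Positivity of the universal pairing on unoriented 1-manifolds with
boundary `2j` points: such a manifold is a perfect matching `f` of the
boundary points together with `k` closed circles; gluing `(f,k)` to `(g,l)`
produces `numLoops f g + k + l` circles, recorded as a power of `X` in
`ℂ[X]`. -/
theorem unoriented_one_manifold_pairing_positive (j : ℕ)
    (a : ({f : Equiv.Perm (Fin (2 * j)) // IsPerfectMatching f} × ℕ) →₀ ℂ)
    (h : (a.sum fun p x => a.sum fun q y =>
        Polynomial.C (x * (starRingEnd ℂ) y) *
          Polynomial.X ^ (numLoops p.1.1 q.1.1 + p.2 + q.2)) = (0 : Polynomial ℂ)) :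
    a = 0 := by
  have hpairing :
      gluingPairing (fun f g : {f // IsPerfectMatching f} => numLoops f.1 g.1) a = 0 := h
  refine eq_zero_of_gluingPairing_eq_zero (N := j) (fun f g => ?_)
    (fun f g => ⟨fun hfg => ?_, ?_⟩) hpairing
  · have := two_mul_numLoops_le (g := g.1) f.2.2
    omega
  · exact Subtype.ext (eq_of_two_mul_numLoops_eq f.2.2 g.2.2 (by omega))
  · rintro rfl
    have := two_mul_numLoops_self f.2
    omega
end

section
/- Fix j : ℕ. Define a 'surface datum' to be a triple (P, g, c) where P is a partition of Fin j into nonempty blocks, g assigns to each block of P a natural number (its genus), and c is a multiset of natural numbers. Given two surface data (P, g, c) and (Q, h, d), form the bipartite graph whose vertices are the blocks of P together with the blocks of Q, with a block B of P adjacent to a block B' of Q whenever B ∩ B' ≠ ∅. For each connected component K of this graph, let n_K be the total number of blocks (from both P and Q) in K, let s_K be the sum of their genera under g and h, and let m_K = ∑_{B ∈ K ∩ P} |B| (the number of elements of Fin j covered by the P-blocks of K); set G_K = 1 − n_K + s_K + m_K ∈ ℕ. Define Glue((P,g,c),(Q,h,d)) ∈ Multiset ℕ to be the multiset {G_K : K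 a connected component} + c + d. Then for every finitely supported function a : SurfaceData →₀ ℂ on the set of surface data, if ∑_{D} ∑_{D'} a(D) · conj(a(D')) · δ_{Glue(D,D')} = 0 in the free ℂ-module (Multiset ℕ) →₀ ℂ (where δ_m is the basis element at m), then a = 0. -/
/-- A surface datum for boundary `j` labeled circles: a partition `P` of
`Fin j` into nonempty blocks (the boundary circles lying on each connected
component with boundary), a genus `g B` for each block `B` of `P`, and a
multiset `c` of genera of closed components. -/
structure SurfaceData (j : ℕ) where
  P : Finpartition (Finset.univ : Finset (Fin j))
  g : P.parts → ℕ
  c : Multiset ℕ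

/-- The bipartite graph on the blocks of `D.P` and the blocks of `D'.P`, with
a block of `D.P` adjacent to a block of `D'.P` iff they intersect. -/
def blockGraph {j : ℕ} (D D' : SurfaceData j) :
    SimpleGraph (↥D.P.parts ⊕ ↥D'.P.parts) where
  Adj v w :=
    match v, w with
    | Sum.inl B, Sum.inr B' => ((B : Finset (Fin j)) ∩ (B' : Finset (Fin j))).Nonempty
    | Sum.inr B', Sum.inl B => ((B : Finset (Fin j)) ∩ (B' : Finset (Fin j))).Nonempty
    | _, _ => False
  symm := ⟨by rintro (B | B) (C | C) h <;> exact h⟩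
  loopless := ⟨by rintro (B | B) h <;> exact h⟩

/-- The genus `G_K = 1 - n_K + s_K + m_K` of the closed surface obtained from
the connected component `K` of the block graph: `n_K` is the number of blocks
in `K`, `s_K` the sum of their genera, and `m_K` the number of elements of
`Fin j` covered by the `D.P`-blocks of `K`.  (For a genuinely connected
component `1 - n_K + m_K ≥ 0`, so the truncated subtraction in
`s_K + m_K + 1 - n_K` is exact.) -/
noncomputable def componentGenus {j : ℕ} (D D' : SurfaceData j)
    (K : (blockGraph D D').ConnectedComponent) : ℕ := by
  classical
  exact
    let S : Finset (↥D.P.parts ⊕ ↥D'.P.parts) :=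
      Finset.univ.filter fun v => (blockGraph D D').connectedComponentMk v = K
    let nK : ℕ := S.card
    let sK : ℕ := ∑ v ∈ S, Sum.elim (fun B => D.g B) (fun B' => D'.g B') v
    let mK : ℕ := ∑ v ∈ S, Sum.elim (fun B : ↥D.P.parts => (B : Finset (Fin j)).card) (fun _ => 0) v
    sK + mK + 1 - nK

/-- Gluing the surface with datum `D` to the orientation reversal of the
surface with datum `D'`: the resulting closed surface is the multiset of the
genera `G_K` of the components `K` of the block graph, together with the
closed components `D.c` and `D'.c`. -/
noncomputable def glueSurfaceData {j : ℕ} (D D' : SurfaceData j) : Multiset ℕ := by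
  classical
  haveI : Finite ((blockGraph D D').ConnectedComponent) := Quot.finite _
  haveI : Fintype ((blockGraph D D').ConnectedComponent) := Fintype.ofFinite _
  exact (Finset.univ : Finset ((blockGraph D D').ConnectedComponent)).val.map
      (componentGenus D D') + D.c + D'.c

open Finset SimpleGraph

namespace SurfacePairing

variable {j : ℕ}

/-! ### The rank function on multisets -/

def lam (m : Multiset ℕ) : ℕ := (m.map fun x => 4 ^ x).sum

lemma lam_add (m n : Multiset ℕ) : lam (m + n) = lam m + lam n := by
  simp [lam]

noncomputable def rank (m : Multiset ℕ) : Lex (ℕ × Lex (ℕ × Lex (ℕ →₀ ℕ))) :=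
  toLex (Multiset.card m, toLex (lam m, toLex m.toFinsupp))

lemma rank_lt_of_card_lt {m n : Multiset ℕ} (h : Multiset.card m < Multiset.card n) :
    rank m < rank n :=
  Prod.Lex.lt_iff.mpr (Or.inl h)

lemma rank_lt_of_lam_lt {m n : Multiset ℕ} (h0 : Multiset.card m = Multiset.card n)
    (h : lam m < lam n) : rank m < rank n :=
  Prod.Lex.lt_iff.mpr (Or.inr ⟨h0, Prod.Lex.lt_iff.mpr (Or.inl h)⟩)

lemma rank_lt_of_lex_lt {m n : Multiset ℕ} (h0 : Multiset.card m = Multiset.card n)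
    (h1 : lam m = lam n) (h : toLex m.toFinsupp < toLex n.toFinsupp) : rank m < rank n :=
  Prod.Lex.lt_iff.mpr (Or.inr ⟨h0, Prod.Lex.lt_iff.mpr (Or.inr ⟨h1, h⟩)⟩)

end SurfacePairing
section General

variable {j : ℕ}

lemma adj_of_mem {D D' : SurfaceData j} {B : ↥D.P.parts} {B' : ↥D'.P.parts} {x : Fin j}
    (hx : x ∈ (B : Finset (Fin j))) (hx' : x ∈ (B' : Finset (Fin j))) :
    (blockGraph D D').Adj (Sum.inl B) (Sum.inr B') :=
  ⟨x, Finset.mem_inter.mpr ⟨hx, hx'⟩⟩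

lemma mk_inl_surjective (D D' : SurfaceData j) :
    Function.Surjective fun B : ↥D.P.parts =>
      (blockGraph D D').connectedComponentMk (Sum.inl B) := by
  intro K
  induction K using SimpleGraph.ConnectedComponent.ind with
  | _ v =>
    match v with
    | Sum.inl B => exact ⟨B, rfl⟩
    | Sum.inr B' =>
      obtain ⟨x, hx⟩ := D'.P.nonempty_of_mem_parts B'.2
      obtain ⟨B, hB, hxB⟩ := D.P.exists_mem (Finset.mem_univ x)
      exact ⟨⟨B, hB⟩, SimpleGraph.ConnectedComponent.sound (adj_of_mem hxB hx).reachable⟩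

lemma mk_inr_surjective (D D' : SurfaceData j) :
    Function.Surjective fun B' : ↥D'.P.parts =>
      (blockGraph D D').connectedComponentMk (Sum.inr B') := by
  intro K
  induction K using SimpleGraph.ConnectedComponent.ind with
  | _ v =>
    match v with
    | Sum.inr B' => exact ⟨B', rfl⟩
    | Sum.inl B =>
      obtain ⟨x, hx⟩ := D.P.nonempty_of_mem_parts B.2
      obtain ⟨B', hB', hxB'⟩ := D'.P.exists_mem (Finset.mem_univ x)
      exact ⟨⟨B', hB'⟩,
        (SimpleGraph.ConnectedComponent.sound (adj_of_mem hx hxB').reachable).symm⟩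

lemma ncomp_le_left (D D' : SurfaceData j) :
    Nat.card ((blockGraph D D').ConnectedComponent) ≤ D.P.parts.card := by
  classical
  have := Nat.card_le_card_of_surjective _ (mk_inl_surjective D D')
  simpa [Nat.card_eq_fintype_card, Fintype.card_coe] using this

lemma ncomp_le_right (D D' : SurfaceData j) :
    Nat.card ((blockGraph D D').ConnectedComponent) ≤ D'.P.parts.card := by
  classical
  have := Nat.card_le_card_of_surjective _ (mk_inr_surjective D D')
  simpa [Nat.card_eq_fintype_card, Fintype.card_coe] using this

lemma glue_card (D D' : SurfaceData j) :
    Multiset.card (glueSurfaceData D D') =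
      Nat.card ((blockGraph D D').ConnectedComponent)
        + Multiset.card D.c + Multiset.card D'.c := by
  classical
  unfold glueSurfaceData
  simp only [Multiset.card_add, Multiset.card_map]
  congr 1
  congr 1
  rw [← Finset.card_def, @Finset.card_univ _ (Fintype.ofFinite _)]
  exact (@Nat.card_eq_fintype_card _ (Fintype.ofFinite _)).symm

lemma parts_eq_of_ncomp (D D' : SurfaceData j)
    (h1 : Nat.card ((blockGraph D D').ConnectedComponent) = D.P.parts.card)
    (h2 : Nat.card ((blockGraph D D').ConnectedComponent) = D'.P.parts.card) :
    D.P = D'.P := by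
  classical
  haveI : Finite ((blockGraph D D').ConnectedComponent) := Quot.finite _
  haveI : Fintype ((blockGraph D D').ConnectedComponent) := Fintype.ofFinite _
  have hinj1 : Function.Injective fun B : ↥D.P.parts =>
      (blockGraph D D').connectedComponentMk (Sum.inl B) := by
    refine ((Fintype.bijective_iff_surjective_and_card _).mpr
      ⟨mk_inl_surjective D D', ?_⟩).1
    rw [Fintype.card_coe, ← h1, Nat.card_eq_fintype_card]
  have hinj2 : Function.Injective fun B' : ↥D'.P.parts =>
      (blockGraph D D').connectedComponentMk (Sum.inr B') := by
    refine ((Fintype.bijective_iff_surjective_and_card _).mpr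
      ⟨mk_inr_surjective D D', ?_⟩).1
    rw [Fintype.card_coe, ← h2, Nat.card_eq_fintype_card]
  -- any P-block and Q-block sharing a point are equal
  have part_eq : ∀ B ∈ D.P.parts, ∀ B' ∈ D'.P.parts, ∀ x : Fin j,
      x ∈ B → x ∈ B' → B = B' := by
    intro B hB B' hB' x hxB hxB'
    apply Finset.Subset.antisymm
    · intro y hyB
      obtain ⟨B'', hB'', hyB''⟩ := D'.P.exists_mem (Finset.mem_univ y)
      have e1 : (blockGraph D D').connectedComponentMk (Sum.inr (⟨B'', hB''⟩ : ↥D'.P.parts))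
          = (blockGraph D D').connectedComponentMk (Sum.inl (⟨B, hB⟩ : ↥D.P.parts)) :=
        (SimpleGraph.ConnectedComponent.sound
          (adj_of_mem (B := ⟨B, hB⟩) (B' := ⟨B'', hB''⟩) hyB hyB'').reachable).symm
      have e2 : (blockGraph D D').connectedComponentMk (Sum.inl (⟨B, hB⟩ : ↥D.P.parts))
          = (blockGraph D D').connectedComponentMk (Sum.inr (⟨B', hB'⟩ : ↥D'.P.parts)) :=
        SimpleGraph.ConnectedComponent.sound
          (adj_of_mem (B := ⟨B, hB⟩) (B' := ⟨B', hB'⟩) hxB hxB').reachable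
      have := hinj2 (e1.trans e2)
      have : B'' = B' := congrArg Subtype.val this
      exact this ▸ hyB''
    · intro y hyB'
      obtain ⟨B₂, hB₂, hyB₂⟩ := D.P.exists_mem (Finset.mem_univ y)
      have e1 : (blockGraph D D').connectedComponentMk (Sum.inl (⟨B₂, hB₂⟩ : ↥D.P.parts))
          = (blockGraph D D').connectedComponentMk (Sum.inr (⟨B', hB'⟩ : ↥D'.P.parts)) :=
        SimpleGraph.ConnectedComponent.sound
          (adj_of_mem (B := ⟨B₂, hB₂⟩) (B' := ⟨B', hB'⟩) hyB₂ hyB').reachable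
      have e2 : (blockGraph D D').connectedComponentMk (Sum.inr (⟨B', hB'⟩ : ↥D'.P.parts))
          = (blockGraph D D').connectedComponentMk (Sum.inl (⟨B, hB⟩ : ↥D.P.parts)) :=
        (SimpleGraph.ConnectedComponent.sound
          (adj_of_mem (B := ⟨B, hB⟩) (B' := ⟨B', hB'⟩) hxB hxB').reachable).symm
      have := hinj1 (e1.trans e2)
      have : B₂ = B := congrArg Subtype.val this
      exact this ▸ hyB₂
  apply Finpartition.ext
  apply Finset.Subset.antisymm
  · intro B hB
    obtain ⟨x, hx⟩ := D.P.nonempty_of_mem_parts hB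
    obtain ⟨B', hB', hxB'⟩ := D'.P.exists_mem (Finset.mem_univ x)
    exact (part_eq B hB B' hB' x hx hxB') ▸ hB'
  · intro B' hB'
    obtain ⟨x, hx⟩ := D'.P.nonempty_of_mem_parts hB'
    obtain ⟨B, hB, hxB⟩ := D.P.exists_mem (Finset.mem_univ x)
    exact (part_eq B hB B' hB' x hxB hx) ▸ hB

end General
section Same

variable {j : ℕ} (P : Finpartition (Finset.univ : Finset (Fin j)))
  (g h : ↥P.parts → ℕ) (c d : Multiset ℕ)

private def sd : SurfaceData j := ⟨P, g, c⟩

lemma proj_eq_of_adj {v w : ↥P.parts ⊕ ↥P.parts}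
    (ha : (blockGraph (⟨P, g, c⟩ : SurfaceData j) ⟨P, h, d⟩).Adj v w) :
    Sum.elim id id v = Sum.elim id id w := by
  match v, w with
  | Sum.inl B, Sum.inr B' =>
    obtain ⟨x, hx⟩ := ha
    rw [Finset.mem_inter] at hx
    exact Subtype.ext (P.eq_of_mem_parts B.2 B'.2 hx.1 hx.2)
  | Sum.inr B', Sum.inl B =>
    obtain ⟨x, hx⟩ := ha
    rw [Finset.mem_inter] at hx
    exact Subtype.ext (P.eq_of_mem_parts B'.2 B.2 hx.2 hx.1)
  | Sum.inl B, Sum.inl B' => exact ha.elim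
  | Sum.inr B, Sum.inr B' => exact ha.elim

lemma proj_eq_of_reachable {v w : ↥P.parts ⊕ ↥P.parts}
    (hr : (blockGraph (⟨P, g, c⟩ : SurfaceData j) ⟨P, h, d⟩).Reachable v w) :
    Sum.elim id id v = Sum.elim id id w := by
  obtain ⟨p⟩ := hr
  induction p with
  | nil => rfl
  | cons ha _ ih => exact (proj_eq_of_adj P g h c d ha).trans ih

lemma mem_component_iff (B : ↥P.parts) (v : ↥P.parts ⊕ ↥P.parts) :
    (blockGraph (⟨P, g, c⟩ : SurfaceData j) ⟨P, h, d⟩).connectedComponentMk v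
      = (blockGraph (⟨P, g, c⟩ : SurfaceData j) ⟨P, h, d⟩).connectedComponentMk (Sum.inl B)
    ↔ v = Sum.inl B ∨ v = Sum.inr B := by
  constructor
  · intro hv
    have hproj := proj_eq_of_reachable P g h c d
      (SimpleGraph.ConnectedComponent.eq.mp hv)
    match v with
    | Sum.inl B₂ =>
      have : B₂ = B := by simpa using hproj
      exact Or.inl (by rw [this])
    | Sum.inr B₂ =>
      have : B₂ = B := by simpa using hproj
      exact Or.inr (by rw [this])
  · rintro (rfl | rfl)
    · rfl
    · obtain ⟨x, hx⟩ := P.nonempty_of_mem_parts B.2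
      exact (SimpleGraph.ConnectedComponent.sound
        (adj_of_mem (D := (⟨P, g, c⟩ : SurfaceData j)) (D' := ⟨P, h, d⟩)
          (B := B) (B' := B) hx hx).reachable).symm

lemma filter_comp_eq (B : ↥P.parts)
    (inst : DecidablePred fun v : ↥P.parts ⊕ ↥P.parts =>
      (blockGraph (⟨P, g, c⟩ : SurfaceData j) ⟨P, h, d⟩).connectedComponentMk v
        = (blockGraph (⟨P, g, c⟩ : SurfaceData j) ⟨P, h, d⟩).connectedComponentMk (Sum.inl B)) :
    @Finset.filter _ _ inst Finset.univ = {Sum.inl B, Sum.inr B} := by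
  classical
  ext v
  simp only [Finset.mem_filter, Finset.mem_univ, true_and, Finset.mem_insert,
    Finset.mem_singleton]
  exact mem_component_iff P g h c d B v

lemma componentGenus_same (B : ↥P.parts) :
    componentGenus (⟨P, g, c⟩ : SurfaceData j) ⟨P, h, d⟩
      ((blockGraph (⟨P, g, c⟩ : SurfaceData j) ⟨P, h, d⟩).connectedComponentMk (Sum.inl B))
    = g B + h B + ((B : Finset (Fin j)).card - 1) := by
  classical
  have hcard : 1 ≤ (B : Finset (Fin j)).card := (P.nonempty_of_mem_parts B.2).card_pos
  unfold componentGenus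
  simp only []
  rw [filter_comp_eq P g h c d B]
  have hne : (Sum.inl B : ↥P.parts ⊕ ↥P.parts) ≠ Sum.inr B := by simp
  rw [Finset.sum_pair hne, Finset.sum_pair hne, Finset.card_pair hne]
  simp only [Sum.elim_inl, Sum.elim_inr]
  omega

lemma mk_inl_bijective :
    Function.Bijective fun B : ↥P.parts =>
      (blockGraph (⟨P, g, c⟩ : SurfaceData j) ⟨P, h, d⟩).connectedComponentMk (Sum.inl B) := by
  constructor
  · intro B B' hBB'
    have := proj_eq_of_reachable P g h c d (SimpleGraph.ConnectedComponent.eq.mp hBB')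
    simpa using this
  · exact mk_inl_surjective _ _

lemma univ_comp_val
    (inst : Fintype ((blockGraph (⟨P, g, c⟩ : SurfaceData j) ⟨P, h, d⟩).ConnectedComponent)) :
    (@Finset.univ _ inst).val = (Finset.univ : Finset ↥P.parts).val.map
      (fun B => (blockGraph (⟨P, g, c⟩ : SurfaceData j) ⟨P, h, d⟩).connectedComponentMk
        (Sum.inl B)) := by
  classical
  let e := Equiv.ofBijective _ (mk_inl_bijective P g h c d)
  have := @Finset.univ_map_equiv_to_embedding _ _ _ inst e
  rw [← this, Finset.map_val]
  rfl

lemma glue_same :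
    glueSurfaceData (⟨P, g, c⟩ : SurfaceData j) ⟨P, h, d⟩ =
      ((Finset.univ : Finset ↥P.parts).val.map
        fun B => g B + h B + ((B : Finset (Fin j)).card - 1)) + c + d := by
  classical
  unfold glueSurfaceData
  rw [univ_comp_val P g h c d _, Multiset.map_map]
  congr 1
  congr 1
  exact Multiset.map_congr rfl fun B _ => componentGenus_same P g h c d B

end Same
section Key

open SurfacePairing

variable {j : ℕ} (P : Finpartition (Finset.univ : Finset (Fin j)))
  (g h : ↥P.parts → ℕ) (c d : Multiset ℕ)

lemma card_glue_same :
    Multiset.card (glueSurfaceData (⟨P, g, c⟩ : SurfaceData j) ⟨P, h, d⟩)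
      = P.parts.card + Multiset.card c + Multiset.card d := by
  classical
  rw [glue_same P g h c d]
  simp only [Multiset.card_add, Multiset.card_map]
  rw [← Finset.card_def, Finset.card_univ, Fintype.card_coe]

lemma lam_glue_same :
    lam (glueSurfaceData (⟨P, g, c⟩ : SurfaceData j) ⟨P, h, d⟩)
      = (∑ B : ↥P.parts, 4 ^ (g B + h B + ((B : Finset (Fin j)).card - 1)))
        + lam c + lam d := by
  classical
  rw [glue_same P g h c d, lam_add, lam_add]
  congr 2
  unfold lam
  rw [Multiset.map_map]
  rfl

lemma amgm_le (x y s : ℕ) : 2 * 4 ^ (x + y + s) ≤ 4 ^ (x + x + s) + 4 ^ (y + y + s) := by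
  have h1 : 2 * (4 ^ x * 4 ^ y) ≤ 4 ^ x * 4 ^ x + 4 ^ y * 4 ^ y := by
    have := two_mul_le_add_sq (4 ^ x : ℕ) (4 ^ y)
    simpa [pow_two, mul_assoc] using this
  calc 2 * 4 ^ (x + y + s) = 2 * (4 ^ x * 4 ^ y) * 4 ^ s := by rw [pow_add, pow_add]; ring
    _ ≤ (4 ^ x * 4 ^ x + 4 ^ y * 4 ^ y) * 4 ^ s := Nat.mul_le_mul_right _ h1
    _ = 4 ^ (x + x + s) + 4 ^ (y + y + s) := by rw [add_mul, pow_add, pow_add, pow_add, pow_add]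

lemma amgm_lt (x y s : ℕ) (hxy : x ≠ y) :
    2 * 4 ^ (x + y + s) < 4 ^ (x + x + s) + 4 ^ (y + y + s) := by
  have hab : (4 : ℕ) ^ x ≠ 4 ^ y := fun e => hxy (Nat.pow_right_injective (by norm_num) e)
  have h1 : 2 * (4 ^ x * 4 ^ y) < 4 ^ x * 4 ^ x + 4 ^ y * 4 ^ y := by
    rcases hab.lt_or_gt with hlt | hlt
    · obtain ⟨k, hk⟩ := Nat.exists_eq_add_of_lt hlt
      rw [hk]; ring_nf; nlinarith
    · obtain ⟨k, hk⟩ := Nat.exists_eq_add_of_lt hlt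
      rw [hk]; ring_nf; nlinarith
  have hs : 0 < (4 : ℕ) ^ s := Nat.pow_pos (by norm_num)
  calc 2 * 4 ^ (x + y + s) = 2 * (4 ^ x * 4 ^ y) * 4 ^ s := by
        rw [pow_add, pow_add]; ring
    _ < (4 ^ x * 4 ^ x + 4 ^ y * 4 ^ y) * 4 ^ s := by
        exact Nat.mul_lt_mul_of_lt_of_le h1 (le_refl _) hs
    _ = 4 ^ (x + x + s) + 4 ^ (y + y + s) := by rw [add_mul, pow_add, pow_add, pow_add, pow_add]

end Key
section KeyLemma

open SurfacePairing

variable {j : ℕ}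

lemma key_lemma (D D' : SurfaceData j) (hne : D ≠ D') :
    rank (glueSurfaceData D D') <
      max (rank (glueSurfaceData D D)) (rank (glueSurfaceData D' D')) := by
  classical
  obtain ⟨P, g, c⟩ := D
  obtain ⟨Q, h, d⟩ := D'
  by_cases hPQ : P = Q
  · subst hPQ
    have hcu := card_glue_same P g h c d
    have hcv := card_glue_same P g g c c
    have hcw := card_glue_same P h h d d
    by_cases hcard : Multiset.card c = Multiset.card d
    · by_cases hg : g = h
      · subst hg
        have hcd : c ≠ d := by
          intro e
          exact hne (by rw [e])
        by_cases hlam : lam c = lam d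
        · -- lexicographic comparison on the closed parts
          have hlex : toLex c.toFinsupp ≠ toLex d.toFinsupp := by
            intro e
            exact hcd (Multiset.toFinsupp.injective e)
          have hlu := lam_glue_same P g g c d
          have hlv := lam_glue_same P g g c c
          have hlw := lam_glue_same P g g d d
          rcases hlex.lt_or_gt with hlt | hlt
          · refine lt_max_of_lt_right (rank_lt_of_lex_lt (by omega) (by omega) ?_)
            rw [glue_same P g g c d, glue_same P g g d d]
            simp only [Multiset.toFinsupp_add]
            exact add_lt_add_left (add_lt_add_right hlt _) _
          · refine lt_max_of_lt_left (rank_lt_of_lex_lt (by omega) (by omega) ?_)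
            rw [glue_same P g g c d, glue_same P g g c c]
            simp only [Multiset.toFinsupp_add]
            exact add_lt_add_right hlt _
        · have hlu := lam_glue_same P g g c d
          have hlv := lam_glue_same P g g c c
          have hlw := lam_glue_same P g g d d
          rcases (Ne.lt_or_gt hlam) with hlt | hlt
          · exact lt_max_of_lt_right (rank_lt_of_lam_lt (by omega) (by omega))
          · exact lt_max_of_lt_left (rank_lt_of_lam_lt (by omega) (by omega))
      · -- strict AM-GM on some block
        have hB : ∃ B : ↥P.parts, g B ≠ h B := by
          by_contra hall
          push_neg at hall
          exact hg (funext hall)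
        obtain ⟨B₀, hB₀⟩ := hB
        have hlu := lam_glue_same P g h c d
        have hlv := lam_glue_same P g g c c
        have hlw := lam_glue_same P h h d d
        have hsum : 2 * (∑ B : ↥P.parts, 4 ^ (g B + h B + ((B : Finset (Fin j)).card - 1)))
            < (∑ B : ↥P.parts, 4 ^ (g B + g B + ((B : Finset (Fin j)).card - 1)))
              + (∑ B : ↥P.parts, 4 ^ (h B + h B + ((B : Finset (Fin j)).card - 1))) := by
          rw [Finset.mul_sum, ← Finset.sum_add_distrib]
          exact Finset.sum_lt_sum (fun B _ => amgm_le _ _ _)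
            ⟨B₀, Finset.mem_univ _, amgm_lt _ _ _ hB₀⟩
        have : lam (glueSurfaceData (⟨P, g, c⟩ : SurfaceData j) ⟨P, h, d⟩)
              < lam (glueSurfaceData (⟨P, g, c⟩ : SurfaceData j) ⟨P, g, c⟩)
            ∨ lam (glueSurfaceData (⟨P, g, c⟩ : SurfaceData j) ⟨P, h, d⟩)
              < lam (glueSurfaceData (⟨P, h, d⟩ : SurfaceData j) ⟨P, h, d⟩) := by omega
        rcases this with hlt | hlt
        · exact lt_max_of_lt_left (rank_lt_of_lam_lt (by omega) hlt)
        · exact lt_max_of_lt_right (rank_lt_of_lam_lt (by omega) hlt)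
    · -- different numbers of closed components
      have : Multiset.card (glueSurfaceData (⟨P, g, c⟩ : SurfaceData j) ⟨P, h, d⟩)
            < Multiset.card (glueSurfaceData (⟨P, g, c⟩ : SurfaceData j) ⟨P, g, c⟩)
          ∨ Multiset.card (glueSurfaceData (⟨P, g, c⟩ : SurfaceData j) ⟨P, h, d⟩)
            < Multiset.card (glueSurfaceData (⟨P, h, d⟩ : SurfaceData j) ⟨P, h, d⟩) := by omega
      rcases this with hlt | hlt
      · exact lt_max_of_lt_left (rank_lt_of_card_lt hlt)
      · exact lt_max_of_lt_right (rank_lt_of_card_lt hlt)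
  · -- different partitions: fewer components than average
    have h1 := ncomp_le_left (⟨P, g, c⟩ : SurfaceData j) ⟨Q, h, d⟩
    have h2 := ncomp_le_right (⟨P, g, c⟩ : SurfaceData j) ⟨Q, h, d⟩
    have h3 : ¬(Nat.card ((blockGraph (⟨P, g, c⟩ : SurfaceData j) ⟨Q, h, d⟩).ConnectedComponent)
          = P.parts.card
        ∧ Nat.card ((blockGraph (⟨P, g, c⟩ : SurfaceData j) ⟨Q, h, d⟩).ConnectedComponent)
          = Q.parts.card) := by
      rintro ⟨e1, e2⟩
      exact hPQ (parts_eq_of_ncomp (⟨P, g, c⟩ : SurfaceData j) ⟨Q, h, d⟩ e1 e2)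
    have hcu := glue_card (⟨P, g, c⟩ : SurfaceData j) ⟨Q, h, d⟩
    have hcv := card_glue_same P g g c c
    have hcw := card_glue_same Q h h d d
    dsimp only at hcu h1 h2
    have : Multiset.card (glueSurfaceData (⟨P, g, c⟩ : SurfaceData j) ⟨Q, h, d⟩)
          < Multiset.card (glueSurfaceData (⟨P, g, c⟩ : SurfaceData j) ⟨P, g, c⟩)
        ∨ Multiset.card (glueSurfaceData (⟨P, g, c⟩ : SurfaceData j) ⟨Q, h, d⟩)
          < Multiset.card (glueSurfaceData (⟨Q, h, d⟩ : SurfaceData j) ⟨Q, h, d⟩) := by omega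
    rcases this with hlt | hlt
    · exact lt_max_of_lt_left (rank_lt_of_card_lt hlt)
    · exact lt_max_of_lt_right (rank_lt_of_card_lt hlt)

end KeyLemma
/-- Positivity of the universal pairing on compact oriented surfaces with
boundary `j` labeled circles: if
`∑_{D} ∑_{D'} a D * conj (a D') * δ_{Glue(D,D')} = 0` in the free `ℂ`-module
on `Multiset ℕ`, then `a = 0`. -/
theorem surface_pairing_positive (j : ℕ) (a : SurfaceData j →₀ ℂ)
    (h : (a.sum fun D x => a.sum fun D' y =>
        Finsupp.single (glueSurfaceData D D') (x * (starRingEnd ℂ) y))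
      = (0 : Multiset ℕ →₀ ℂ)) :
    a = 0 := by

  classical
  by_contra ha
  have hsupp : a.support.Nonempty := Finsupp.support_nonempty_iff.mpr ha
  obtain ⟨D₀, hD₀, hmax⟩ := Finset.exists_max_image a.support
    (fun D => SurfacePairing.rank (glueSurfaceData D D)) hsupp
  set m := glueSurfaceData D₀ D₀ with hm
  have happ := congrArg (fun f : Multiset ℕ →₀ ℂ => f m) h
  simp only [Finsupp.zero_apply, Finsupp.sum_apply, Finsupp.sum,
    Finset.sum_apply', Finsupp.single_apply] at happ
  have hoff : ∀ D ∈ a.support,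
      (∑ D' ∈ a.support, if glueSurfaceData D D' = m then a D * (starRingEnd ℂ) (a D') else 0)
        = (if glueSurfaceData D D = m then a D * (starRingEnd ℂ) (a D) else 0) := by
    intro D hD
    refine Finset.sum_eq_single_of_mem D hD ?_
    intro D' hD' hne'
    rw [if_neg]
    intro heq
    have hk := key_lemma D D' (Ne.symm hne')
    have hle : max (SurfacePairing.rank (glueSurfaceData D D)) (SurfacePairing.rank (glueSurfaceData D' D'))
        ≤ SurfacePairing.rank m := max_le (hmax D hD) (hmax D' hD')
    rw [heq] at hk
    exact lt_irrefl _ (lt_of_lt_of_le hk hle)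
  rw [Finset.sum_congr rfl hoff] at happ
  have hre := congrArg Complex.re happ
  rw [Complex.re_sum] at hre
  simp only [Complex.mul_conj, apply_ite Complex.re, Complex.ofReal_re,
    Complex.zero_re] at hre
  have hnn : ∀ D ∈ a.support,
      (0 : ℝ) ≤ if glueSurfaceData D D = m then Complex.normSq (a D) else 0 := by
    intro D _
    split
    · exact Complex.normSq_nonneg _
    · exact le_refl _
  have hz := (Finset.sum_eq_zero_iff_of_nonneg hnn).mp hre D₀ hD₀
  rw [if_pos rfl] at hz
  exact Finsupp.mem_support_iff.mp hD₀ (Complex.normSq_eq_zero.mp hz)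
end
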